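/- arXiv:2504.09934 — 5 statements merged into one kernel-verified Lean document; each statement's English description precedes it below -/
import Mathlib

section
/- Let z ∈ ℝᵖ with 0 ≤ z₁ (first coordinate) and let x̂ ≥ 0 be a real number. Suppose the set F = {u ∈ ℝᵖ : u₁ ≤ z₁, ‖z‖₂² ≤ uᵀz} is nonempty. Then z ∈ F and z is a minimizer of ‖u - x̂e¹‖₂² over u ∈ F, i.e., for all u ∈ F, ‖z - x̂e¹‖₂ ≤ ‖u - x̂e¹‖₂. -/
open scoped RealInnerProductSpace

theorem second_stage_minimizer {p : ℕ}
    (z : EuclideanSpace ℝ (Fin (p + 1))) (xhat : ℝ)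
    (hz1 : 0 ≤ z 0) (hx : 0 ≤ xhat)
    (hF : ({u : EuclideanSpace ℝ (Fin (p + 1)) |
      u 0 ≤ z 0 ∧ ‖z‖ ^ 2 ≤ ⟪u, z⟫}).Nonempty) :
    z ∈ {u : EuclideanSpace ℝ (Fin (p + 1)) | u 0 ≤ z 0 ∧ ‖z‖ ^ 2 ≤ ⟪u, z⟫} ∧
    ∀ u : EuclideanSpace ℝ (Fin (p + 1)),
      u 0 ≤ z 0 → ‖z‖ ^ 2 ≤ ⟪u, z⟫ →
      ‖z - xhat • EuclideanSpace.single 0 1‖ ≤ ‖u - xhat • EuclideanSpace.single 0 1‖ := by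
  constructor
  · exact ⟨le_refl _, by rw [real_inner_self_eq_norm_sq]⟩
  intro u hu1 hu2
  set a : EuclideanSpace ℝ (Fin (p + 1)) := xhat • EuclideanSpace.single 0 1 with ha
  have h2 : ⟪u - z, a⟫ = xhat * (u 0 - z 0) := by
    rw [ha, real_inner_smul_right, EuclideanSpace.inner_single_right]
    simp [PiLp.sub_apply, mul_comm]
  have key : 0 ≤ ⟪u - z, z - a⟫ := by
    rw [inner_sub_right, inner_sub_left, real_inner_self_eq_norm_sq, h2]
    have : 0 ≤ xhat * (z 0 - u 0) := mul_nonneg hx (by linarith)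
    linarith
  have hsq : ‖z - a‖ ^ 2 ≤ ‖u - a‖ ^ 2 := by
    have : u - a = (u - z) + (z - a) := by abel
    rw [this, norm_add_sq_real]
    nlinarith [norm_nonneg (u - z), sq_nonneg ‖u - z‖]
  exact (pow_le_pow_iff_left₀ (norm_nonneg _) (norm_nonneg _) two_ne_zero).mp hsq
end

section
/- Let z ∈ ℝᵖ with 0 < z₁ < ‖z‖₂ and x̂ ≥ 0. Then for every u in F = {u ∈ ℝᵖ : u₁ ≤ z₁, ‖z‖₂² ≤ uᵀz}, one has (u - z)ᵀ(x̂e¹ - z) ≤ 0; consequently z is the projection of x̂e¹ onto F. -/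
open scoped RealInnerProductSpace

theorem variational_inequality_and_projection {p : ℕ}
    (z : EuclideanSpace ℝ (Fin (p + 1))) (xhat : ℝ)
    (hz1 : 0 < z 0) (hz2 : z 0 < ‖z‖) (hx : 0 ≤ xhat) :
    (∀ u : EuclideanSpace ℝ (Fin (p + 1)),
      u 0 ≤ z 0 → ‖z‖ ^ 2 ≤ ⟪u, z⟫ →
      ⟪u - z, xhat • EuclideanSpace.single 0 1 - z⟫ ≤ 0) ∧
    (∀ u : EuclideanSpace ℝ (Fin (p + 1)),
      u 0 ≤ z 0 → ‖z‖ ^ 2 ≤ ⟪u, z⟫ →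
      ‖z - xhat • EuclideanSpace.single 0 1‖ ≤ ‖u - xhat • EuclideanSpace.single 0 1‖) := by
  have key : ∀ u : EuclideanSpace ℝ (Fin (p + 1)),
      u 0 ≤ z 0 → ‖z‖ ^ 2 ≤ ⟪u, z⟫ →
      ⟪u - z, xhat • EuclideanSpace.single 0 1 - z⟫ ≤ 0 := by
    intro u h1 h2
    have heq : ⟪u - z, xhat • (EuclideanSpace.single 0 1 : EuclideanSpace ℝ (Fin (p+1))) - z⟫
        = xhat * (u 0 - z 0) + (‖z‖ ^ 2 - ⟪u, z⟫) := by
      rw [inner_sub_left, inner_sub_right, inner_sub_right, real_inner_smul_right,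
        real_inner_smul_right, EuclideanSpace.inner_single_right,
        EuclideanSpace.inner_single_right, real_inner_self_eq_norm_sq]
      simp
      ring
    rw [heq]
    have h3 : xhat * (u 0 - z 0) ≤ 0 :=
      mul_nonpos_of_nonneg_of_nonpos hx (by linarith)
    linarith
  refine ⟨key, fun u h1 h2 => ?_⟩
  set w : EuclideanSpace ℝ (Fin (p+1)) := xhat • EuclideanSpace.single 0 1
  have h := key u h1 h2
  have hexp : ‖u - w‖ ^ 2 = ‖u - z‖ ^ 2 + 2 * ⟪u - z, z - w⟫ + ‖z - w‖ ^ 2 := by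
    have : u - w = (u - z) + (z - w) := by abel
    rw [this, norm_add_sq_real]
  have hsign : 0 ≤ ⟪u - z, z - w⟫ := by
    have : ⟪u - z, z - w⟫ = -⟪u - z, w - z⟫ := by
      rw [← inner_neg_right]; congr 1; abel
    linarith [this ▸ neg_nonneg.mpr h]
  have hsq : ‖z - w‖ ^ 2 ≤ ‖u - w‖ ^ 2 := by
    nlinarith [sq_nonneg ‖u - z‖]
  exact le_of_pow_le_pow_left₀ two_ne_zero (norm_nonneg _) hsq
end

section
/- Let z ∈ ℝᵖ be a nonzero vector with z₁ = 0, and x̂ ≥ 0. Then z minimizes ‖u - x̂e¹‖₂² over the set F = {u ∈ ℝᵖ : u₁ ≤ 0, ‖z‖₂² ≤ uᵀz}. -/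
open scoped RealInnerProductSpace

theorem second_case_minimizer {p : ℕ}
    (z : EuclideanSpace ℝ (Fin (p + 1))) (xhat : ℝ)
    (hz : z ≠ 0) (hz1 : z 0 = 0) (hx : 0 ≤ xhat) :
    z ∈ {u : EuclideanSpace ℝ (Fin (p + 1)) | u 0 ≤ 0 ∧ ‖z‖ ^ 2 ≤ ⟪u, z⟫} ∧
    ∀ u : EuclideanSpace ℝ (Fin (p + 1)),
      u 0 ≤ 0 → ‖z‖ ^ 2 ≤ ⟪u, z⟫ →
      ‖z - xhat • EuclideanSpace.single 0 1‖ ^ 2 ≤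
        ‖u - xhat • EuclideanSpace.single 0 1‖ ^ 2 := by
  constructor
  · exact ⟨hz1.le, by rw [real_inner_self_eq_norm_sq]⟩
  · intro u hu0 huz
    set w : EuclideanSpace ℝ (Fin (p + 1)) := xhat • EuclideanSpace.single 0 1 with hw
    have hwnorm : ‖w‖ ^ 2 = xhat ^ 2 := by
      rw [hw, norm_smul, EuclideanSpace.norm_single]
      simp [sq_abs]
    have hzw : ⟪z, w⟫ = 0 := by
      simp [hw, real_inner_smul_right, EuclideanSpace.inner_single_right, hz1]
    have huw : ⟪u, w⟫ = xhat * u 0 := by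
      simp [hw, real_inner_smul_right, EuclideanSpace.inner_single_right, mul_comm]
    have h1 : ‖z - w‖ ^ 2 = ‖z‖ ^ 2 - 2 * ⟪z, w⟫ + ‖w‖ ^ 2 := norm_sub_sq_real z w
    have h2 : ‖u - w‖ ^ 2 = ‖u‖ ^ 2 - 2 * ⟪u, w⟫ + ‖w‖ ^ 2 := norm_sub_sq_real u w
    have h3 : ‖u - z‖ ^ 2 = ‖u‖ ^ 2 - 2 * ⟪u, z⟫ + ‖z‖ ^ 2 := norm_sub_sq_real u z
    have h4 : (0 : ℝ) ≤ ‖u - z‖ ^ 2 := sq_nonneg _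
    nlinarith [mul_nonneg hx (neg_nonneg.mpr hu0)]
end

section
/- Let e ∈ ℝᵖ be a unit vector, z ∈ ℝᵖ with eᵀz ≥ 0, b⁰ ∈ ℝ and x̂ ∈ ℝ with x̂ ≥ -b⁰. Suppose F = {u ∈ ℝᵖ : eᵀz ≥ eᵀ(u + b⁰e), ‖z‖₂² ≤ (u + b⁰e)ᵀz} is nonempty. Then u* := z - b⁰e belongs to F and minimizes ‖u - x̂e‖₂² over F, and the minimum value equals ‖z - (b⁰ + x̂)e‖₂². -/
open scoped RealInnerProductSpace

theorem second_stage_with_bias {p : ℕ}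
    (e z : EuclideanSpace ℝ (Fin p)) (he : ‖e‖ = 1)
    (b0 xhat : ℝ) (hez : 0 ≤ ⟪e, z⟫) (hx : -b0 ≤ xhat)
    (hF : ({u : EuclideanSpace ℝ (Fin p) |
      ⟪e, u + b0 • e⟫ ≤ ⟪e, z⟫ ∧ ‖z‖ ^ 2 ≤ ⟪u + b0 • e, z⟫}).Nonempty) :
    (z - b0 • e) ∈ {u : EuclideanSpace ℝ (Fin p) |
        ⟪e, u + b0 • e⟫ ≤ ⟪e, z⟫ ∧ ‖z‖ ^ 2 ≤ ⟪u + b0 • e, z⟫} ∧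
    (∀ u : EuclideanSpace ℝ (Fin p),
      ⟪e, u + b0 • e⟫ ≤ ⟪e, z⟫ → ‖z‖ ^ 2 ≤ ⟪u + b0 • e, z⟫ →
      ‖(z - b0 • e) - xhat • e‖ ^ 2 ≤ ‖u - xhat • e‖ ^ 2) ∧
    ‖(z - b0 • e) - xhat • e‖ ^ 2 = ‖z - (b0 + xhat) • e‖ ^ 2 := by
  have hzbe : z - b0 • e + b0 • e = z := by abel
  have hsame : z - b0 • e - xhat • e = z - (b0 + xhat) • e := by
    rw [add_smul]; abel
  have hsq : ∀ (c : ℝ) (v : EuclideanSpace ℝ (Fin p)),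
      ‖v - c • e‖ ^ 2 = ‖v‖ ^ 2 - 2 * (c * ⟪v, e⟫) + c ^ 2 := by
    intro c v
    rw [norm_sub_sq_real, real_inner_smul_right, norm_smul, he,
      Real.norm_eq_abs, mul_one, sq_abs]
  refine ⟨⟨?_, ?_⟩, ?_, ?_⟩
  · rw [hzbe]
  · rw [hzbe, real_inner_self_eq_norm_sq]
  · intro u h1 h2
    rw [inner_add_right, real_inner_smul_right, real_inner_self_eq_norm_sq,
      he, one_pow, mul_one] at h1
    rw [inner_add_left, real_inner_smul_left] at h2
    have h3 : (0:ℝ) ≤ ‖(u + b0 • e) - z‖ ^ 2 := by positivity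
    rw [norm_sub_sq_real, norm_add_sq_real, real_inner_smul_right,
      norm_smul, he, Real.norm_eq_abs, mul_one, sq_abs,
      inner_add_left, real_inner_smul_left] at h3
    rw [hsame, hsq, hsq]
    have hcez : ⟪z, e⟫ = ⟪e, z⟫ := real_inner_comm e z
    have hceu : ⟪u, e⟫ = ⟪e, u⟫ := real_inner_comm e u
    nlinarith [mul_nonneg (by linarith : (0:ℝ) ≤ b0 + xhat)
      (by linarith : (0:ℝ) ≤ ⟪e, z⟫ - ⟪e, u⟫ - b0)]
  · rw [hsame]
end

section
/- Let c ∈ ℝⁿ, m ∈ ℝⁿ, M ∈ ℝⁿˣⁿ, ρ ≥ 0. Consider minimizing 2Σᵢ cᵢ (e¹)ᵀvⁱ over v¹,...,vⁿ ∈ ℝᵖ subject to (e¹)ᵀvⁱ ≥ 0 for all i and Σⱼ ‖mⱼe¹ + Σᵢ Mᵢⱼ vⁱ‖₂² ≤ ρ². If this problem has an optimal solution, then it has an optimal solution (v¹)*,...,(vⁿ)* in which every (vⁱ)* is a scalar multiple of e¹. -/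
/-! Replacing each `vⁱ` by its first coordinate times `e¹` leaves the objective and the sign
constraints untouched, since they only read first coordinates. The map `x ↦ x₀ • e¹` is linear,
fixes `e¹` and does not increase norms, so it maps every constraint vector `mⱼ e¹ + ∑ᵢ Mᵢⱼ vⁱ`
to the corresponding vector of the projected family, with no larger norm; feasibility survives. -/

open Finset

theorem sum_norm_sq_affine_map_le {ι κ E : Type*} [Fintype ι] [Fintype κ]
    [SeminormedAddCommGroup E] [NormedSpace ℝ E] (P : E →ₗ[ℝ] E) (hP : ∀ x, ‖P x‖ ≤ ‖x‖)
    (e : E) (hPe : P e = e) (m : κ → ℝ) (M : ι → κ → ℝ) (v : ι → E) :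
    ∑ j, ‖m j • e + ∑ i, M i j • P (v i)‖ ^ 2 ≤ ∑ j, ‖m j • e + ∑ i, M i j • v i‖ ^ 2 := by
  refine sum_le_sum fun j _ => ?_
  have hmap : m j • e + ∑ i, M i j • P (v i) = P (m j • e + ∑ i, M i j • v i) := by
    simp only [map_add, map_sum, map_smul, hPe]
  rw [hmap]
  exact pow_le_pow_left₀ (norm_nonneg _) (hP _) 2

theorem EuclideanSpace.norm_apply_smul_single_le {𝕜 ι : Type*} [RCLike 𝕜] [Fintype ι]
    [DecidableEq ι] (x : EuclideanSpace 𝕜 ι) (k : ι) :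
    ‖x k • EuclideanSpace.single k (1 : 𝕜)‖ ≤ ‖x‖ := by
  rw [norm_smul, PiLp.norm_single, norm_one, mul_one]
  exact PiLp.norm_apply_le x k

theorem first_stage_ellipsoid_collinear_optimum_general {p n : ℕ}
    (c m : Fin n → ℝ) (M : Matrix (Fin n) (Fin n) ℝ) (ρ : ℝ)
    (hopt : ∃ v : Fin n → EuclideanSpace ℝ (Fin (p + 1)),
      ((∀ i, 0 ≤ v i 0) ∧
        ∑ j, ‖(m j) • (EuclideanSpace.single 0 1 : EuclideanSpace ℝ (Fin (p + 1))) +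
          ∑ i, (M i j) • v i‖ ^ 2 ≤ ρ ^ 2) ∧
      ∀ w : Fin n → EuclideanSpace ℝ (Fin (p + 1)),
        ((∀ i, 0 ≤ w i 0) ∧
          ∑ j, ‖(m j) • (EuclideanSpace.single 0 1 : EuclideanSpace ℝ (Fin (p + 1))) +
            ∑ i, (M i j) • w i‖ ^ 2 ≤ ρ ^ 2) →
        2 * ∑ i, c i * v i 0 ≤ 2 * ∑ i, c i * w i 0) :
    ∃ v : Fin n → EuclideanSpace ℝ (Fin (p + 1)),
      ((∀ i, 0 ≤ v i 0) ∧
        ∑ j, ‖(m j) • (EuclideanSpace.single 0 1 : EuclideanSpace ℝ (Fin (p + 1))) +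
          ∑ i, (M i j) • v i‖ ^ 2 ≤ ρ ^ 2) ∧
      (∀ w : Fin n → EuclideanSpace ℝ (Fin (p + 1)),
        ((∀ i, 0 ≤ w i 0) ∧
          ∑ j, ‖(m j) • (EuclideanSpace.single 0 1 : EuclideanSpace ℝ (Fin (p + 1))) +
            ∑ i, (M i j) • w i‖ ^ 2 ≤ ρ ^ 2) →
        2 * ∑ i, c i * v i 0 ≤ 2 * ∑ i, c i * w i 0) ∧
      ∀ i, ∃ t : ℝ, v i = t • (EuclideanSpace.single 0 1 : EuclideanSpace ℝ (Fin (p + 1))) := by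
  obtain ⟨v, ⟨hpos, hfeas⟩, hmin⟩ := hopt
  set e : EuclideanSpace ℝ (Fin (p + 1)) := EuclideanSpace.single 0 1
  let P : EuclideanSpace ℝ (Fin (p + 1)) →ₗ[ℝ] EuclideanSpace ℝ (Fin (p + 1)) :=
    (EuclideanSpace.proj (𝕜 := ℝ) (0 : Fin (p + 1))).toLinearMap.smulRight e
  have hP : ∀ x, P x = x 0 • e := fun _ => rfl
  have hfst : ∀ i, P (v i) 0 = v i 0 := fun i => by simp [hP, e]
  refine ⟨fun i => P (v i), ⟨fun i => hfst i ▸ hpos i, ?_⟩, fun w hw => ?_, fun i => ⟨v i 0, rfl⟩⟩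
  · refine (sum_norm_sq_affine_map_le P (fun x => ?_) e ?_ m M v).trans hfeas
    · exact EuclideanSpace.norm_apply_smul_single_le x 0
    · simp [hP, e]
  · simpa only [hfst] using hmin w hw

theorem first_stage_ellipsoid_collinear_optimum {p n : ℕ}
    (c m : Fin n → ℝ) (M : Matrix (Fin n) (Fin n) ℝ) (ρ : ℝ) (hρ : 0 ≤ ρ)
    (hopt : ∃ v : Fin n → EuclideanSpace ℝ (Fin (p + 1)),
      ((∀ i, 0 ≤ v i 0) ∧
        ∑ j, ‖(m j) • (EuclideanSpace.single 0 1 : EuclideanSpace ℝ (Fin (p + 1))) +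
          ∑ i, (M i j) • v i‖ ^ 2 ≤ ρ ^ 2) ∧
      ∀ w : Fin n → EuclideanSpace ℝ (Fin (p + 1)),
        ((∀ i, 0 ≤ w i 0) ∧
          ∑ j, ‖(m j) • (EuclideanSpace.single 0 1 : EuclideanSpace ℝ (Fin (p + 1))) +
            ∑ i, (M i j) • w i‖ ^ 2 ≤ ρ ^ 2) →
        2 * ∑ i, c i * v i 0 ≤ 2 * ∑ i, c i * w i 0) :
    ∃ v : Fin n → EuclideanSpace ℝ (Fin (p + 1)),
      ((∀ i, 0 ≤ v i 0) ∧
        ∑ j, ‖(m j) • (EuclideanSpace.single 0 1 : EuclideanSpace ℝ (Fin (p + 1))) +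
          ∑ i, (M i j) • v i‖ ^ 2 ≤ ρ ^ 2) ∧
      (∀ w : Fin n → EuclideanSpace ℝ (Fin (p + 1)),
        ((∀ i, 0 ≤ w i 0) ∧
          ∑ j, ‖(m j) • (EuclideanSpace.single 0 1 : EuclideanSpace ℝ (Fin (p + 1))) +
            ∑ i, (M i j) • w i‖ ^ 2 ≤ ρ ^ 2) →
        2 * ∑ i, c i * v i 0 ≤ 2 * ∑ i, c i * w i 0) ∧
      ∀ i, ∃ t : ℝ, v i = t • (EuclideanSpace.single 0 1 : EuclideanSpace ℝ (Fin (p + 1))) :=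
  first_stage_ellipsoid_collinear_optimum_general c m M ρ hopt
end
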